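/- If a Π⁰₁ class P = [T] (T a recursive tree) contains a set B that is total, nonrecursive, and of the form Φ^A for a 2-generic set A, then P is not thin: there is a recursive subtree S of T such that [S] is not the intersection of [T] with any clopen subset of 2^ω. -/

import Mathlib

/-- Finite binary strings. -/
abbrev BStr := List Bool

/-- The length-`k` initial segment of an infinite sequence, as a finite string. -/
def seg {α : Type} (A : ℕ → α) (k : ℕ) : List α := (List.range k).map A

/-- A Σ⁰₁ (r.e.) set of binary strings. -/
def Sigma01 (V : Set BStr) : Prop :=
  ∃ f : BStr → ℕ → Bool, Computable₂ f ∧ ∀ σ, σ ∈ V ↔ ∃ n, f σ n = true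

/-- A Σ⁰₂ set of binary strings. -/
def Sigma02 (V : Set BStr) : Prop :=
  ∃ f : BStr → ℕ × ℕ → Bool, Computable₂ f ∧ ∀ σ, σ ∈ V ↔ ∃ m, ∀ n, f σ (m, n) = true

/-- `A` meets the set of strings `V`. -/
def Meets (A : ℕ → Bool) (V : Set BStr) : Prop := ∃ k, seg A k ∈ V

/-- `A` avoids the set of strings `V`. -/
def Avoids (A : ℕ → Bool) (V : Set BStr) : Prop := ∃ k, ∀ τ, seg A k <+: τ → τ ∉ V

/-- `A` is 1-generic. -/
def OneGeneric (A : ℕ → Bool) : Prop := ∀ V, Sigma01 V → Meets A V ∨ Avoids A V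

/-- `A` is 2-generic. -/
def TwoGeneric (A : ℕ → Bool) : Prop := ∀ V, Sigma02 V → Meets A V ∨ Avoids A V

/-- A Turing functional: a computable, oracle-use-monotone map from finite oracle
strings to partial values. -/
structure Functional (α β : Type) [Primcodable α] [Primcodable β] where
  φ : List α → ℕ → Option β
  comp : Computable₂ φ
  mono : ∀ {σ τ : List α} {x : ℕ} {b : β}, σ <+: τ → φ σ x = some b → φ τ x = some b

/-- `Φ^A = B` (in particular `Φ^A` is total). -/
def FunApplies {α β : Type} [Primcodable α] [Primcodable β]
    (Φ : Functional α β) (A : ℕ → α) (B : ℕ → β) : Prop :=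
  ∀ x, ∃ k, Φ.φ (seg A k) x = some (B x)

/-- Turing reducibility `B ≤_T A`. -/
def TuringLE {α β : Type} [Primcodable α] [Primcodable β] (B : ℕ → β) (A : ℕ → α) : Prop :=
  ∃ Φ : Functional α β, FunApplies Φ A B

/-- Turing equivalence `B ≡_T A`. -/
def TuringEquiv {α β : Type} [Primcodable α] [Primcodable β] (B : ℕ → β) (A : ℕ → α) : Prop :=
  TuringLE B A ∧ TuringLE A B

/-- A tree: a set of strings closed under initial segments. -/
def IsTree {α : Type} (T : Set (List α)) : Prop := ∀ σ τ : List α, σ <+: τ → τ ∈ T → σ ∈ T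

/-- A recursive tree. -/
def RecTree {α : Type} [Primcodable α] (T : Set (List α)) : Prop :=
  IsTree T ∧ ∃ f : List α → Bool, Computable f ∧ ∀ σ, σ ∈ T ↔ f σ = true

/-- Every string on the tree has a proper extension on the tree. -/
def ExtendibleTree {α : Type} (T : Set (List α)) : Prop :=
  ∀ σ ∈ T, ∃ τ ∈ T, σ <+: τ ∧ σ ≠ τ

/-- The set `[T]` of infinite paths through the tree `T`. -/
def paths {α : Type} (T : Set (List α)) : Set (ℕ → α) := {X | ∀ k, seg X k ∈ T}

/-- A clopen subset of the path space: a finite union of basic cylinders. -/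
def ClopenC {α : Type} (N : Set (ℕ → α)) : Prop :=
  ∃ F : Finset (List α), N = {X | ∃ σ ∈ F, seg X σ.length = σ}

/-- A Π⁰₁ class: the set of paths through a recursive tree. -/
def Pi01C {α : Type} [Primcodable α] (P : Set (ℕ → α)) : Prop := ∃ T, RecTree T ∧ P = paths T

/-- A thin Π⁰₁ class: every Π⁰₁ subclass is the intersection with a clopen set. -/
def ThinPi01 {α : Type} [Primcodable α] (P : Set (ℕ → α)) : Prop :=
  Pi01C P ∧ ∀ Q, Pi01C Q → Q ⊆ P → ∃ N, ClopenC N ∧ Q = P ∩ N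

/-- `A` is of thin-free degree: no set Turing equivalent to `A` belongs to a thin Π⁰₁ class. -/
def ThinFreeDegree (A : ℕ → Bool) : Prop :=
  ∀ B : ℕ → Bool, TuringEquiv B A → ∀ P : Set (ℕ → Bool), ThinPi01 P → B ∉ P

open Classical in
/-- The halting problem `0′`. -/
noncomputable def K : ℕ → Bool := fun n =>
  if (Nat.Partrec.Code.eval (Denumerable.ofNat Nat.Partrec.Code n) n).Dom then true else false

/-- A recursive (limit-lemma) approximation of `A`. -/
def RecApprox (σs : ℕ → BStr) (A : ℕ → Bool) : Prop :=
  Computable σs ∧ ∀ n, ∃ s0, ∀ s ≥ s0, (σs s).take n = seg A n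

/-- `τ` is an initial segment of `A`. -/
def InitSegOf {α : Type} (τ : List α) (A : ℕ → α) : Prop := τ = seg A τ.length

/-- A recursively enumerable set of natural numbers. -/
def REset (S : Set ℕ) : Prop :=
  ∃ f : ℕ → ℕ → Bool, Computable₂ f ∧ ∀ s, s ∈ S ↔ ∃ n, f s n = true

/-- A Σ₁-correct approximation: every infinite r.e. set of stages contains a stage
whose approximating string is a true initial segment of `A`. -/
def SigmaOneCorrect (σs : ℕ → BStr) (A : ℕ → Bool) : Prop :=
  ∀ S : Set ℕ, REset S → S.Infinite → ∃ s ∈ S, InitSegOf (σs s) A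

/-!
Genericity of `A` yields an initial segment `σ` of `A` above which (i) `Φ` can be made to
converge at every argument, (ii) every string computed by `Φ` lies on `T` (as `B ∈ [T]`), and
(iii) `Φ` splits, since without splittings above an initial segment of `A` the value
`Φ^A = B` could be computed by searching for any convergent computation above it.
By (i), a computable search along extensions of `σ` produces a computable `Φ`-image `Z` of a
path through `σ`, which lies in `[T]` by (ii). By (iii), every initial segment of `Z` is shared
by some other `Φ`-image, again in `[T]`. So `Z` is a computable non-isolated point of `[T]`, and
the recursive tree `S` of initial segments of `Z` has `[S] = {Z}`, which is not the trace of a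
clopen set on `[T]`.
-/

open Encodable

section Segments

variable {α : Type}

@[simp] lemma length_seg (X : ℕ → α) (k : ℕ) : (seg X k).length = k := by
  simp [seg]

lemma seg_succ (X : ℕ → α) (k : ℕ) : seg X (k + 1) = seg X k ++ [X k] := by
  simp [seg, List.range_succ]

@[simp] lemma getElem_seg (X : ℕ → α) {k x : ℕ} (h : x < (seg X k).length) :
    (seg X k)[x] = X x := by
  simp [seg]

lemma take_seg (X : ℕ → α) {k m : ℕ} (h : k ≤ m) : (seg X m).take k = seg X k := by
  simp [seg, ← List.map_take, List.take_range, Nat.min_eq_left h]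

lemma seg_prefix_seg (X : ℕ → α) {k m : ℕ} (h : k ≤ m) : seg X k <+: seg X m :=
  take_seg X h ▸ List.take_prefix _ _

lemma InitSegOf.of_prefix_seg {τ : List α} {X : ℕ → α} {m : ℕ} (h : τ <+: seg X m) :
    InitSegOf τ X := by
  rw [InitSegOf, ← take_seg X (by simpa using h.length_le), ← List.prefix_iff_eq_take.1 h]

lemma seg_eq_seg_iff {X Y : ℕ → α} {n : ℕ} : seg X n = seg Y n ↔ ∀ x < n, X x = Y x := by
  simp [seg, List.map_inj_left]

lemma seg_eq_map_some_iff {f : ℕ → Option α} {ρ : List α} :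
    seg f ρ.length = ρ.map some ↔ ∀ x (h : x < ρ.length), f x = some ρ[x] := by
  simp [List.ext_getElem_iff, seg]

lemma exists_seg_forall_prefix_and {A : ℕ → α} {P Q : List α → Prop}
    (hP : ∃ k, ∀ τ, seg A k <+: τ → P τ) (hQ : ∃ k, ∀ τ, seg A k <+: τ → Q τ) :
    ∃ k, ∀ τ, seg A k <+: τ → P τ ∧ Q τ := by
  obtain ⟨k₁, h₁⟩ := hP
  obtain ⟨k₂, h₂⟩ := hQ
  exact ⟨max k₁ k₂, fun τ hτ => ⟨h₁ τ ((seg_prefix_seg A (le_max_left _ _)).trans hτ),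
    h₂ τ ((seg_prefix_seg A (le_max_right _ _)).trans hτ)⟩⟩

end Segments

section Computability

variable {α β : Type} [Primcodable α] [Primcodable β]

lemma primrec_isPrefix [DecidableEq α] : Primrec₂ fun σ τ : List α => decide (σ <+: τ) :=
  (Primrec.eq.decide.comp (Primrec.list_take.comp (Primrec.list_length.comp .fst) .snd) .fst).of_eq
    fun _ => by simp [List.prefix_iff_eq_take, eq_comm]

lemma computable₂_seg {f : α → ℕ → β} (hf : Computable₂ f) :
    Computable₂ fun a n => seg (f a) n := by
  have hstep : Computable₂ fun (p : α × ℕ) (q : ℕ × List β) => q.2 ++ [f p.1 q.1] :=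
    Computable.list_concat.comp (Computable.snd.comp .snd)
      (hf.comp (Computable.fst.comp .fst) (Computable.fst.comp .snd))
  refine (Computable.nat_rec .snd (.const []) hstep).of_eq fun p => ?_
  induction p.2 with
  | zero => rfl
  | succ n ih => simp only [ih, seg_succ]

lemma exists_computable_choice {p : α → β → Bool} (hp : Computable₂ p)
    (h : ∀ a, ∃ b, p a b = true) : ∃ f : α → β, Computable f ∧ ∀ a, p a (f a) = true := by
  let g : α → ℕ → Option β := fun a n => (decode n).filter (p a)
  have hg : Computable₂ g :=
    (Computable.option_bind (Computable.decode.comp .snd) (Computable.cond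
      (hp.comp (Computable.fst.comp .fst) .snd) (Computable.option_some.comp .snd)
      (.const none)).to₂).of_eq fun q => by
        simp only [g]; cases (decode q.2 : Option β) <;> simp [Option.filter]
  have hdom : ∀ a, (Nat.rfindOpt (g a)).Dom := fun a => by
    obtain ⟨b, hb⟩ := h a
    exact Nat.rfindOpt_dom.2 ⟨encode b, b, by simp [g, hb]⟩
  refine ⟨fun a => (Nat.rfindOpt (g a)).get (hdom a),
    (Partrec.rfindOpt hg).of_eq_tot fun a => Part.get_mem _, fun a => ?_⟩
  obtain ⟨n, hn⟩ := Nat.rfindOpt_spec (Part.get_mem (hdom a))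
  simp only [g, Option.mem_def, Option.filter_eq_some_iff] at hn
  exact hn.2

end Computability

namespace Functional

variable {α β : Type} [Primcodable α] [Primcodable β] (Φ : Functional α β)

def ConvergesAbove (τ : List α) : Prop :=
  ∀ x, ∃ ν, τ <+: ν ∧ (Φ.φ ν x).isSome

def SplitsAbove (τ : List α) : Prop :=
  ∃ ν₁ ν₂ x b₁ b₂, τ <+: ν₁ ∧ τ <+: ν₂ ∧ Φ.φ ν₁ x = some b₁ ∧ Φ.φ ν₂ x = some b₂ ∧ b₁ ≠ b₂

def OutputsIn (τ : List α) (T : Set (List β)) : Prop :=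
  ∀ (Y : ℕ → β) n, (∀ x < n, Φ.φ τ x = some (Y x)) → seg Y n ∈ T

/-- A weak form of `Y = Φ^G` for a sequence `G` through `σ`: each finite part of `Y` is computed
from some extension of `σ`. -/
def IsImageAbove (σ : List α) (Y : ℕ → β) : Prop :=
  ∀ n, ∃ τ, σ <+: τ ∧ ∀ x < n, Φ.φ τ x = some (Y x)

variable {Φ}

lemma IsImageAbove.apply_eq {σ : List α} {Y : ℕ → β} {x : ℕ} {b : β}
    (hY : Φ.IsImageAbove σ Y) (h : Φ.φ σ x = some b) : Y x = b := by
  obtain ⟨τ, hστ, hτ⟩ := hY (x + 1)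
  simpa [Φ.mono hστ h] using (hτ x x.lt_succ_self).symm

lemma IsImageAbove.of_prefix {σ τ : List α} {Y : ℕ → β} (hστ : σ <+: τ)
    (hY : Φ.IsImageAbove τ Y) : Φ.IsImageAbove σ Y := fun n =>
  (hY n).imp fun _ ⟨hτν, hν⟩ => ⟨hστ.trans hτν, hν⟩

lemma IsImageAbove.mem_paths {σ : List α} {Y : ℕ → β} {T : Set (List β)}
    (hY : Φ.IsImageAbove σ Y) (hT : ∀ τ, σ <+: τ → Φ.OutputsIn τ T) : Y ∈ paths T := fun n => by
  obtain ⟨τ, hστ, hτ⟩ := hY n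
  exact hT τ hστ Y n hτ

theorem exists_computable_isImageAbove [DecidableEq α] [Inhabited β] {σ : List α}
    (hσ : ∀ τ, σ <+: τ → Φ.ConvergesAbove τ) : ∃ Y, Computable Y ∧ Φ.IsImageAbove σ Y := by
  -- off the extensions of `σ` every candidate is accepted, which keeps the search total
  let p : ℕ × List α → List α → Bool := fun q ν =>
    !decide (σ <+: q.2) || (decide (q.2 <+: ν) && (Φ.φ ν q.1).isSome)
  have hp : Computable₂ p := Primrec.or.to_comp.comp
    (Primrec.not.to_comp.comp (primrec_isPrefix.to_comp.comp (.const σ) (Computable.snd.comp .fst)))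
    (Primrec.and.to_comp.comp (primrec_isPrefix.to_comp.comp (Computable.snd.comp .fst) .snd)
      (Primrec.option_isSome.to_comp.comp (Φ.comp.comp .snd (Computable.fst.comp .fst))))
  obtain ⟨next, hnext, hpnext⟩ := exists_computable_choice hp fun q => by
    by_cases hq : σ <+: q.2
    · obtain ⟨ν, hν, hdef⟩ := hσ q.2 hq q.1
      exact ⟨ν, by simp [p, hν, hdef]⟩
    · exact ⟨q.2, by simp [p, hq]⟩
  let c : ℕ → List α := fun i => Nat.rec σ (fun i τ => next (i, τ)) i
  have hc : Computable c :=
    (Computable.nat_rec .id (.const σ) (hnext.comp .snd).to₂).of_eq fun _ => rfl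
  have hstep : ∀ i, σ <+: c i → c i <+: c (i + 1) ∧ (Φ.φ (c (i + 1)) i).isSome := fun i hi => by
    simpa [p, hi] using hpnext (i, c i)
  have hσc : ∀ i, σ <+: c i := fun i => by
    induction i with
    | zero => exact List.prefix_refl σ
    | succ i ih => exact ih.trans (hstep i ih).1
  have hmono : ∀ {i j}, i ≤ j → c i <+: c j := fun hij => by
    induction hij with
    | refl => exact List.prefix_refl _
    | step _ ih => exact ih.trans (hstep _ (hσc _)).1
  refine ⟨fun x => (Φ.φ (c (x + 1)) x).getD default,
    Primrec.option_getD_default.to_comp.comp (Φ.comp.comp (hc.comp .succ) .id),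
    fun n => ⟨c n, hσc n, fun x hx => Φ.mono (hmono hx) ?_⟩⟩
  obtain ⟨b, hb⟩ := Option.isSome_iff_exists.1 (hstep x (hσc x)).2
  simp [hb]

lemma IsImageAbove.exists_ne_seg_eq [DecidableEq α] [Inhabited β] {σ : List α} {Z : ℕ → β}
    (hZ : Φ.IsImageAbove σ Z) (hconv : ∀ τ, σ <+: τ → Φ.ConvergesAbove τ)
    (hsplit : ∀ τ, σ <+: τ → Φ.SplitsAbove τ) (M : ℕ) :
    ∃ Y, Φ.IsImageAbove σ Y ∧ Y ≠ Z ∧ seg Y M = seg Z M := by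
  obtain ⟨τ, hστ, hτ⟩ := hZ M
  obtain ⟨ν, x, b, hτν, hν, hb⟩ : ∃ ν x b, τ <+: ν ∧ Φ.φ ν x = some b ∧ b ≠ Z x := by
    obtain ⟨ν₁, ν₂, x, b₁, b₂, h₁, h₂, hν₁, hν₂, hne⟩ := hsplit τ hστ
    by_cases hb₁ : b₁ = Z x
    · exact ⟨ν₂, x, b₂, h₂, hν₂, hb₁ ▸ hne.symm⟩
    · exact ⟨ν₁, x, b₁, h₁, hν₁, hb₁⟩
  have hσν := hστ.trans hτν
  obtain ⟨Y, -, hY⟩ := exists_computable_isImageAbove fun ρ hρ => hconv ρ (hσν.trans hρ)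
  refine ⟨Y, hY.of_prefix hσν, fun hYZ => hb (hYZ ▸ hY.apply_eq hν).symm, ?_⟩
  exact seg_eq_seg_iff.2 fun y hy => hY.apply_eq (Φ.mono hτν (hτ y hy))

end Functional

section InitialSegments

variable {α : Type}

lemma isTree_setOf_initSegOf (Z : ℕ → α) : IsTree {τ | InitSegOf τ Z} :=
  fun _ τ hστ (hτ : τ = _) => InitSegOf.of_prefix_seg (hτ ▸ hστ)

lemma recTree_setOf_initSegOf [Primcodable α] [DecidableEq α] {Z : ℕ → α} (hZ : Computable Z) :
    RecTree {τ | InitSegOf τ Z} :=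
  ⟨isTree_setOf_initSegOf Z, fun τ => decide (τ = seg Z τ.length),
    Primrec.eq.decide.to_comp.comp .id
      ((computable₂_seg (f := fun _ : List α => Z) (hZ.comp .snd)).comp .id
        Primrec.list_length.to_comp),
    fun τ => by simp [InitSegOf]⟩

lemma paths_setOf_initSegOf (Z : ℕ → α) : paths {τ | InitSegOf τ Z} = {Z} := by
  ext X
  simp only [paths, InitSegOf, length_seg, Set.mem_ofPred_eq, Set.mem_singleton_iff]
  refine ⟨fun h => funext fun x => seg_eq_seg_iff.1 (h (x + 1)) x x.lt_succ_self, ?_⟩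
  rintro rfl k
  rfl

lemma singleton_ne_inter_clopen {P N : Set (ℕ → α)} {Z : ℕ → α}
    (hacc : ∀ M, ∃ Y ∈ P, Y ≠ Z ∧ seg Y M = seg Z M) (hN : ClopenC N) : {Z} ≠ P ∩ N := by
  obtain ⟨F, rfl⟩ := hN
  intro hPN
  obtain ⟨-, ρ, hρF, hρ⟩ := hPN ▸ Set.mem_singleton Z
  obtain ⟨Y, hYP, hYZ, hY⟩ := hacc ρ.length
  exact hYZ (hPN.symm ▸ ⟨hYP, ρ, hρF, hY.trans hρ⟩ : Y ∈ ({Z} : Set _))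

theorem exists_recTree_subset_paths_ne_inter_clopen [Primcodable α] [DecidableEq α]
    {T : Set (List α)} {Z : ℕ → α} (hZ : Computable Z) (hZT : Z ∈ paths T)
    (hacc : ∀ M, ∃ Y ∈ paths T, Y ≠ Z ∧ seg Y M = seg Z M) :
    ∃ S : Set (List α), S ⊆ T ∧ RecTree S ∧
      ∀ N : Set (ℕ → α), ClopenC N → paths S ≠ paths T ∩ N := by
  refine ⟨{τ | InitSegOf τ Z}, fun τ (hτ : τ = _) => ?_, recTree_setOf_initSegOf hZ,
    fun N hN => paths_setOf_initSegOf Z ▸ singleton_ne_inter_clopen hacc hN⟩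
  rw [hτ]
  exact hZT _

end InitialSegments

namespace FunApplies

variable {α β : Type} [Primcodable α] [Primcodable β] {Φ : Functional α β} {A : ℕ → α}
  {B : ℕ → β}

lemma eq_of_apply_seg (hΦ : FunApplies Φ A B) {k x : ℕ} {b : β}
    (h : Φ.φ (seg A k) x = some b) : b = B x := by
  obtain ⟨k', hk'⟩ := hΦ x
  have := Φ.mono (seg_prefix_seg A (le_max_left k k')) h
  rwa [Φ.mono (seg_prefix_seg A (le_max_right k k')) hk', Option.some_inj, eq_comm] at this

lemma computable_of_not_splitsAbove [DecidableEq α] [Inhabited β] (hΦ : FunApplies Φ A B)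
    {k : ℕ} (hk : ¬ Φ.SplitsAbove (seg A k)) : Computable B := by
  let q : ℕ → List α → Bool := fun x ν => decide (seg A k <+: ν) && (Φ.φ ν x).isSome
  have hq : Computable₂ q := Primrec.and.to_comp.comp
    (primrec_isPrefix.to_comp.comp (.const _) .snd)
    (Primrec.option_isSome.to_comp.comp (Φ.comp.comp .snd .fst))
  obtain ⟨f, hf, hqf⟩ := exists_computable_choice hq fun x => by
    obtain ⟨k', hk'⟩ := hΦ x
    exact ⟨seg A (max k k'), by
      simp [q, seg_prefix_seg, Φ.mono (seg_prefix_seg A (le_max_right k k')) hk']⟩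
  have hfB : ∀ x, Φ.φ (f x) x = some (B x) := fun x => by
    obtain ⟨k', hk'⟩ := hΦ x
    obtain ⟨hkf, hdef⟩ : seg A k <+: f x ∧ (Φ.φ (f x) x).isSome := by simpa [q] using hqf x
    obtain ⟨b, hb⟩ := Option.isSome_iff_exists.1 hdef
    rw [hb, Option.some_inj]
    by_contra hne
    exact hk ⟨f x, seg A (max k k'), x, b, B x, hkf, seg_prefix_seg A (le_max_left _ _), hb,
      Φ.mono (seg_prefix_seg A (le_max_right _ _)) hk', hne⟩
  exact (Primrec.option_getD_default.to_comp.comp (Φ.comp.comp hf .id)).of_eq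
    fun x => by simp [hfB]

end FunApplies

lemma sigma02_of_computable {γ δ : Type} [Primcodable γ] [Primcodable δ]
    {p : BStr × γ × δ → Bool} (hp : Computable p) :
    Sigma02 {σ | ∃ c, ∀ d, p (σ, c, d) = true} := by
  -- a code decoding to nothing is a failed witness for `∃` and a vacuous instance of `∀`
  let f : BStr → ℕ × ℕ → Bool := fun σ mn =>
    ((decode mn.1 : Option γ).map fun c =>
      ((decode mn.2 : Option δ).map fun d => p (σ, c, d)).getD true).getD false
  refine ⟨f, ?_, fun σ => ⟨fun ⟨c, hc⟩ => ⟨encode c, fun n => ?_⟩, fun ⟨m, hm⟩ => ?_⟩⟩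
  · have h₁ : Computable₂ fun (y : (BStr × ℕ × ℕ) × γ) (d : δ) => p (y.1.1, y.2, d) :=
      (hp.comp <| (Computable.fst.comp (Computable.fst.comp .fst)).pair
        ((Computable.snd.comp .fst).pair .snd)).to₂
    have h₂ : Computable₂ fun (q : BStr × ℕ × ℕ) (c : γ) =>
        ((decode q.2.2 : Option δ).map fun d => p (q.1, c, d)).getD true :=
      Primrec.option_getD.to_comp.comp (Computable.option_map
        (Computable.decode.comp (Computable.snd.comp (Computable.snd.comp .fst))) h₁)
        (.const true)
    exact Primrec.option_getD.to_comp.comp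
      (Computable.option_map (Computable.decode.comp (Computable.fst.comp .snd)) h₂)
      (.const false)
  · cases h : (decode n : Option δ) <;> simp [f, h, hc]
  · cases hc : (decode m : Option γ) with
    | none => simpa [f, hc] using hm 0
    | some c => exact ⟨c, fun d => by simpa [f, hc] using hm (encode d)⟩

namespace TwoGeneric

variable {A : ℕ → Bool} (hA : TwoGeneric A)
include hA

lemma meets_or_avoids_of_computable {γ δ : Type} [Primcodable γ] [Primcodable δ]
    {p : BStr × γ × δ → Bool} (hp : Computable p) :
    (∃ k c, ∀ d, p (seg A k, c, d) = true) ∨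
      ∃ k, ∀ τ, seg A k <+: τ → ∀ c, ∃ d, p (τ, c, d) = false := by
  refine (hA _ (sigma02_of_computable hp)).imp id fun ⟨k, hk⟩ => ⟨k, fun τ hτ c => ?_⟩
  by_contra h
  push Not at h
  exact hk τ hτ ⟨c, fun d => by simpa using h d⟩

variable {Φ : Functional Bool Bool} {B : ℕ → Bool}

lemma exists_seg_forall_convergesAbove (hΦ : FunApplies Φ A B) :
    ∃ k, ∀ τ, seg A k <+: τ → Φ.ConvergesAbove τ := by
  have hp : Computable fun q : BStr × ℕ × BStr =>
      !(decide (q.1 <+: q.2.2) && (Φ.φ q.2.2 q.2.1).isSome) :=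
    Primrec.not.to_comp.comp <| Primrec.and.to_comp.comp
      (primrec_isPrefix.to_comp.comp .fst (Computable.snd.comp .snd))
      (Primrec.option_isSome.to_comp.comp
        (Φ.comp.comp (Computable.snd.comp .snd) (Computable.fst.comp .snd)))
  rcases hA.meets_or_avoids_of_computable hp with ⟨k, x, hk⟩ | ⟨k, hk⟩
  · obtain ⟨k', hk'⟩ := hΦ x
    simpa [seg_prefix_seg, Φ.mono (seg_prefix_seg A (le_max_right k k')) hk']
      using hk (seg A (max k k'))
  · exact ⟨k, fun τ hτ x => by simpa using hk τ hτ x⟩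

lemma exists_seg_forall_outputsIn {T : Set BStr} (hT : RecTree T) (hΦ : FunApplies Φ A B)
    (hBT : B ∈ paths T) : ∃ k, ∀ τ, seg A k <+: τ → Φ.OutputsIn τ T := by
  obtain ⟨-, fT, hfT, hTf⟩ := hT
  have hout : Computable₂ fun (σ ρ : BStr) => decide (seg (Φ.φ σ) ρ.length = ρ.map some) :=
    Primrec.eq.decide.to_comp.comp
      ((computable₂_seg Φ.comp).comp .fst (Primrec.list_length.to_comp.comp .snd))
      ((Primrec.list_map .id (Primrec.option_some.comp₂ .right)).to_comp.comp .snd)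
  have hp : Computable fun q : BStr × BStr × Unit =>
      decide (seg (Φ.φ q.1) q.2.1.length = q.2.1.map some) && !fT q.2.1 :=
    Primrec.and.to_comp.comp (hout.comp .fst (Computable.fst.comp .snd))
      (Primrec.not.to_comp.comp (hfT.comp (Computable.fst.comp .snd)))
  rcases hA.meets_or_avoids_of_computable hp with ⟨k, ρ, hk⟩ | ⟨k, hk⟩
  · obtain ⟨hρ, hρT⟩ : seg (Φ.φ (seg A k)) ρ.length = ρ.map some ∧ fT ρ = false := by
      simpa using hk ()
    have hρB : ρ = seg B ρ.length := List.ext_getElem (by simp) fun x hx _ => by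
      simpa using hΦ.eq_of_apply_seg (seg_eq_map_some_iff.1 hρ x hx)
    rw [hρB, ← Bool.not_eq_true, ← hTf] at hρT
    exact absurd (hBT _) hρT
  · refine ⟨k, fun τ hτ Y n hY => ?_⟩
    obtain ⟨_, hu⟩ := hk τ hτ (seg Y n)
    have hτY : seg (Φ.φ τ) n = (seg Y n).map some := by
      simpa using (seg_eq_map_some_iff (f := Φ.φ τ) (ρ := seg Y n)).2
        fun x hx => by simpa using hY x (by simpa using hx)
    simpa [hTf, hτY] using hu

lemma exists_seg_forall_splitsAbove (hΦ : FunApplies Φ A B) (hB : ¬ Computable B) :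
    ∃ k, ∀ τ, seg A k <+: τ → Φ.SplitsAbove τ := by
  have hp : Computable fun q : BStr × Unit × ((BStr × BStr) × ℕ) =>
      !(decide (q.1 <+: q.2.2.1.1) && decide (q.1 <+: q.2.2.1.2) &&
        (Φ.φ q.2.2.1.1 q.2.2.2).isSome && (Φ.φ q.2.2.1.2 q.2.2.2).isSome) ||
      decide (Φ.φ q.2.2.1.1 q.2.2.2 = Φ.φ q.2.2.1.2 q.2.2.2) := by
    have hx : Computable fun q : BStr × Unit × ((BStr × BStr) × ℕ) => q.2.2.2 :=
      Computable.snd.comp (Computable.snd.comp .snd)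
    have hν₁ : Computable fun q : BStr × Unit × ((BStr × BStr) × ℕ) => q.2.2.1.1 :=
      Computable.fst.comp (Computable.fst.comp (Computable.snd.comp .snd))
    have hν₂ : Computable fun q : BStr × Unit × ((BStr × BStr) × ℕ) => q.2.2.1.2 :=
      Computable.snd.comp (Computable.fst.comp (Computable.snd.comp .snd))
    have hφ₁ := Φ.comp.comp hν₁ hx
    have hφ₂ := Φ.comp.comp hν₂ hx
    exact Primrec.or.to_comp.comp
      (Primrec.not.to_comp.comp <| Primrec.and.to_comp.comp
        (Primrec.and.to_comp.comp
          (Primrec.and.to_comp.comp (primrec_isPrefix.to_comp.comp .fst hν₁)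
            (primrec_isPrefix.to_comp.comp .fst hν₂))
          (Primrec.option_isSome.to_comp.comp hφ₁))
        (Primrec.option_isSome.to_comp.comp hφ₂))
      (Primrec.eq.decide.to_comp.comp hφ₁ hφ₂)
  rcases hA.meets_or_avoids_of_computable hp with ⟨k, _, hk⟩ | ⟨k, hk⟩
  · refine absurd (hΦ.computable_of_not_splitsAbove (k := k) ?_) hB
    rintro ⟨ν₁, ν₂, x, b₁, b₂, h₁, h₂, hb₁, hb₂, hne⟩
    simpa [h₁, h₂, hb₁, hb₂, hne] using hk ((ν₁, ν₂), x)
  · refine ⟨k, fun τ hτ => ?_⟩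
    obtain ⟨⟨⟨ν₁, ν₂⟩, x⟩, hw⟩ := hk τ hτ ()
    simp only [Bool.not_and, Option.not_isSome, Bool.or_eq_false_iff, Bool.not_eq_eq_eq_not,
      Bool.not_false, decide_eq_true_eq, Option.isNone_eq_false_iff, decide_eq_false_iff_not] at hw
    obtain ⟨⟨⟨⟨h₁, h₂⟩, hs₁⟩, hs₂⟩, hne⟩ := hw
    obtain ⟨b₁, hb₁⟩ := Option.isSome_iff_exists.1 hs₁
    obtain ⟨b₂, hb₂⟩ := Option.isSome_iff_exists.1 hs₂
    exact ⟨ν₁, ν₂, x, b₁, b₂, h₁, h₂, hb₁, hb₂, fun h => hne (by rw [hb₁, hb₂, h])⟩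

end TwoGeneric

/-- if a Π⁰₁ class `[T]` contains a total nonrecursive `B = Φ^A` for a
2-generic `A`, then `[T]` is not thin: some recursive subtree `S` of `T` has
`[S] ≠ [T] ∩ N` for every clopen `N`. -/
theorem pi01_class_with_generic_image_not_thin (T : Set BStr) (hT : RecTree T)
    (A B : ℕ → Bool) (Φ : Functional Bool Bool) (hA : TwoGeneric A)
    (hTot : FunApplies Φ A B) (hNR : ¬ Computable B) (hBP : B ∈ paths T) :
    ∃ S : Set BStr, S ⊆ T ∧ RecTree S ∧
      ∀ N : Set (ℕ → Bool), ClopenC N → paths S ≠ paths T ∩ N := by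
  obtain ⟨k, hk⟩ := exists_seg_forall_prefix_and (hA.exists_seg_forall_convergesAbove hTot)
    (exists_seg_forall_prefix_and (hA.exists_seg_forall_outputsIn hT hTot hBP)
      (hA.exists_seg_forall_splitsAbove hTot hNR))
  have hconv : ∀ τ, seg A k <+: τ → Φ.ConvergesAbove τ := fun τ hτ => (hk τ hτ).1
  have hout : ∀ τ, seg A k <+: τ → Φ.OutputsIn τ T := fun τ hτ => (hk τ hτ).2.1
  obtain ⟨Z, hZc, hZ⟩ := Φ.exists_computable_isImageAbove hconv
  refine exists_recTree_subset_paths_ne_inter_clopen hZc (hZ.mem_paths hout) fun M => ?_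
  obtain ⟨Y, hY, hYZ, hYM⟩ := hZ.exists_ne_seg_eq hconv (fun τ hτ => (hk τ hτ).2.2) M
  exact ⟨Y, hY.mem_paths hout, hYZ, hYM⟩
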